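/- arXiv:2311.06240 — 7 statements merged into one kernel-verified Lean document; each statement's English description precedes it below -/
import Mathlib

section
/- For a symmetric trace-free 3×3 real matrix Q with eigenvalues λ₁, λ₂, λ₃, the polynomial b(Q) := (Tr Q²)³ − 6·(Tr Q³)² equals 2·(λ₁−λ₂)²·(λ₁−λ₃)²·(λ₂−λ₃)². -/
open Matrix

theorem stmt3 (Q U : Matrix (Fin 3) (Fin 3) ℝ) (l : Fin 3 → ℝ)
    (hU : U * Uᵀ = 1) (hQ : Q = U * Matrix.diagonal l * Uᵀ)
    (hsum : l 0 + l 1 + l 2 = 0) :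
    ((Q ^ 2).trace) ^ 3 - 6 * ((Q ^ 3).trace) ^ 2 =
      2 * (l 0 - l 1) ^ 2 * (l 0 - l 2) ^ 2 * (l 1 - l 2) ^ 2 := by
  have hU' : Uᵀ * U = 1 := mul_eq_one_comm.mp hU
  have hpow : ∀ k : ℕ, Q ^ k = U * (Matrix.diagonal l) ^ k * Uᵀ := by
    intro k
    induction k with
    | zero => simp [hU]
    | succ n ih =>
      rw [pow_succ, pow_succ, ih, hQ]
      simp only [Matrix.mul_assoc]
      rw [← Matrix.mul_assoc Uᵀ U, hU', Matrix.one_mul]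
  have htr : ∀ k : ℕ, (Q ^ k).trace = ((Matrix.diagonal l) ^ k).trace := by
    intro k
    rw [hpow k, Matrix.trace_mul_cycle, hU', Matrix.one_mul]
  rw [htr 2, htr 3, Matrix.diagonal_pow, Matrix.diagonal_pow,
    Matrix.trace_diagonal, Matrix.trace_diagonal]
  simp only [Fin.sum_univ_three, Pi.pow_apply]
  have h2 : l 2 = -(l 0 + l 1) := by linarith
  rw [h2]; ring
end

section
/- For a symmetric trace-free 3×3 real matrix Q, with B(Q) := Q⁴ − (5/6)·(Tr Q²)·Q² + (1/9)·(Tr Q²)²·Id, one has Tr(B(Q)²) = (Tr Q²)/54 · ((Tr Q²)³ − 6·(Tr Q³)²). -/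
open Matrix

set_option maxHeartbeats 1000000 in
theorem stmt5 (Q : Matrix (Fin 3) (Fin 3) ℝ) (hsym : Qᵀ = Q) (htr : Q.trace = 0) :
    (((Q ^ 4 - ((5 / 6) * (Q ^ 2).trace) • Q ^ 2
        + ((1 / 9) * ((Q ^ 2).trace) ^ 2) • (1 : Matrix (Fin 3) (Fin 3) ℝ)) ^ 2).trace)
      = (Q ^ 2).trace / 54 * (((Q ^ 2).trace) ^ 3 - 6 * ((Q ^ 3).trace) ^ 2) := by
  have e10 : Q 1 0 = Q 0 1 := by conv_lhs => rw [← hsym, Matrix.transpose_apply]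
  have e20 : Q 2 0 = Q 0 2 := by conv_lhs => rw [← hsym, Matrix.transpose_apply]
  have e21 : Q 2 1 = Q 1 2 := by conv_lhs => rw [← hsym, Matrix.transpose_apply]
  have e22 : Q 2 2 = -(Q 0 0 + Q 1 1) := by
    simp [Matrix.trace, Fin.sum_univ_three, Matrix.diag] at htr; linarith
  have h4 : Q ^ 4 = ((Q ^ 2).trace / 2) • Q ^ 2 + ((Q ^ 3).trace / 3) • Q := by
    ext i j
    fin_cases i <;> fin_cases j <;>
      simp [Matrix.trace, Fin.sum_univ_three, Matrix.diag, pow_succ, Matrix.mul_apply,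
        e10, e20, e21, e22] <;>
      ring
  have htrQ : Q.trace = 0 := htr
  have htr4 : (Q ^ 4).trace = ((Q ^ 2).trace) ^ 2 / 2 := by
    rw [h4]; simp [Matrix.trace_add, Matrix.trace_smul, htrQ, smul_eq_mul]; ring
  rw [h4]
  have p22 : Q ^ 2 * Q ^ 2 = Q ^ 4 := (pow_add Q 2 2).symm
  have p21 : Q ^ 2 * Q = Q ^ 3 := (pow_succ Q 2).symm
  have p12 : Q * Q ^ 2 = Q ^ 3 := (pow_succ' Q 2).symm
  have p11 : Q * Q = Q ^ 2 := (sq Q).symm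
  have expand : ∀ (a b c d : ℝ),
      ((a • Q ^ 2 + b • Q - c • Q ^ 2 + d • (1 : Matrix (Fin 3) (Fin 3) ℝ)) ^ 2)
      = ((a - c) ^ 2) • Q ^ 4 + (2 * (a - c) * b) • Q ^ 3
        + (b ^ 2 + 2 * (a - c) * d) • Q ^ 2 + (2 * b * d) • Q
        + (d ^ 2) • (1 : Matrix (Fin 3) (Fin 3) ℝ) := by
    intro a b c d
    have h : a • Q ^ 2 + b • Q - c • Q ^ 2 + d • (1 : Matrix (Fin 3) (Fin 3) ℝ)
        = (a - c) • Q ^ 2 + b • Q + d • 1 := by module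
    rw [h, sq]
    simp only [add_mul, mul_add, smul_mul_assoc, mul_smul_comm, smul_smul,
      mul_one, one_mul, p22, p21, p12, p11]
    match_scalars <;> ring
  rw [expand]
  simp only [Matrix.trace_add, Matrix.trace_smul, smul_eq_mul, htr4, htrQ,
    Matrix.trace_one, Fintype.card_fin]
  push_cast
  ring
end

section
/- A symmetric trace-free 3×3 real matrix Q is uniaxial (i.e. at least two of its eigenvalues coincide) if and only if B(Q) := Q⁴ − (5/6)·(Tr Q²)·Q² + (1/9)·(Tr Q²)²·Id is the zero matrix. -/
open Matrix

lemma eig_key (x y z s : ℝ) (hxyz : x + y + z = 0) (hxy : x ≠ y) (hsq : x^2 = y^2)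
    (hz : z ^ 4 - (5/6) * s * z ^ 2 + (1/9) * s^2 = 0) : s = 0 := by
  have hxy' : x = -y := by
    have h0 : (x - y) * (x + y) = 0 := by linear_combination hsq
    rcases mul_eq_zero.mp h0 with h | h
    · exact absurd (by linarith) hxy
    · linarith
  have hz0 : z = 0 := by linarith
  rw [hz0] at hz
  nlinarith [hz]

set_option maxHeartbeats 1000000 in
lemma eig_iff (a b c : ℝ) (hsum : a + b + c = 0) :
    (a = b ∨ a = c ∨ b = c) ↔
      (∀ x ∈ ({a, b, c} : Set ℝ),
        x ^ 4 - (5/6) * (a^2+b^2+c^2) * x ^ 2 + (1/9) * (a^2+b^2+c^2)^2 = 0) := by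
  constructor
  · rintro (h | h | h) x hx <;>
      simp only [Set.mem_insert_iff, Set.mem_singleton_iff] at hx
    · subst h
      have hc : c = -2*a := by linarith
      subst hc
      rcases hx with rfl | rfl | rfl <;> ring
    · subst h
      have hb : b = -2*a := by linarith
      subst hb
      rcases hx with rfl | rfl | rfl <;> ring
    · subst h
      have ha : a = -2*b := by linarith
      subst ha
      rcases hx with rfl | rfl | rfl <;> ring
  · intro h
    by_contra hne
    push_neg at hne
    obtain ⟨h1, h2, h3⟩ := hne
    have ha := h a (by simp)
    have hb := h b (by simp)
    have hc := h c (by simp)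
    have fa : (a^2 - (2/3)*(a^2+b^2+c^2)) * (a^2 - (1/6)*(a^2+b^2+c^2)) = 0 := by
      linear_combination ha
    have fb : (b^2 - (2/3)*(a^2+b^2+c^2)) * (b^2 - (1/6)*(a^2+b^2+c^2)) = 0 := by
      linear_combination hb
    have fc : (c^2 - (2/3)*(a^2+b^2+c^2)) * (c^2 - (1/6)*(a^2+b^2+c^2)) = 0 := by
      linear_combination hc
    have hs0 : a^2+b^2+c^2 = 0 := by
      rcases mul_eq_zero.mp fa with fa' | fa' <;> rcases mul_eq_zero.mp fb with fb' | fb' <;>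
        rcases mul_eq_zero.mp fc with fc' | fc'
      · exact eig_key a b c _ hsum h1 (by linarith) hc
      · exact eig_key a b c _ hsum h1 (by linarith) hc
      · exact eig_key a c b _ (by linarith) h2 (by linarith) hb
      · exact eig_key b c a _ (by linarith) h3 (by linarith) ha
      · exact eig_key b c a _ (by linarith) h3 (by linarith) ha
      · exact eig_key a c b _ (by linarith) h2 (by linarith) hb
      · exact eig_key a b c _ hsum h1 (by linarith) hc
      · exact eig_key a b c _ hsum h1 (by linarith) hc
    have ha0 : a = 0 := by nlinarith [sq_nonneg a, sq_nonneg b, sq_nonneg c]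
    have hb0 : b = 0 := by nlinarith [sq_nonneg a, sq_nonneg b, sq_nonneg c]
    exact h1 (by rw [ha0, hb0])

theorem stmt6 (Q U : Matrix (Fin 3) (Fin 3) ℝ) (l : Fin 3 → ℝ)
    (hU : U * Uᵀ = 1) (hQ : Q = U * Matrix.diagonal l * Uᵀ)
    (hsum : l 0 + l 1 + l 2 = 0) :
    (l 0 = l 1 ∨ l 0 = l 2 ∨ l 1 = l 2) ↔
      Q ^ 4 - ((5 / 6) * (Q ^ 2).trace) • Q ^ 2
        + ((1 / 9) * ((Q ^ 2).trace) ^ 2) • (1 : Matrix (Fin 3) (Fin 3) ℝ) = 0 := by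
  have hU' : Uᵀ * U = 1 := mul_eq_one_comm.mp hU
  have conj_mul : ∀ f g : Fin 3 → ℝ,
      (U * Matrix.diagonal f * Uᵀ) * (U * Matrix.diagonal g * Uᵀ)
        = U * Matrix.diagonal (fun i => f i * g i) * Uᵀ := by
    intro f g
    simp only [← Matrix.mul_assoc]
    rw [Matrix.mul_assoc (U * Matrix.diagonal f) Uᵀ U, hU', Matrix.mul_one,
      Matrix.mul_assoc U (Matrix.diagonal f) (Matrix.diagonal g),
      Matrix.diagonal_mul_diagonal]
  have hQ2 : Q ^ 2 = U * Matrix.diagonal (fun i => l i ^ 2) * Uᵀ := by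
    rw [pow_two, hQ, conj_mul]
    congr 2
    ext i
    ring
  have hQ4 : Q ^ 4 = U * Matrix.diagonal (fun i => l i ^ 4) * Uᵀ := by
    rw [show (4:ℕ) = 2 + 2 from rfl, pow_add, hQ2, conj_mul]
    congr 2
    ext i
    ring
  have htr : (Q ^ 2).trace = l 0 ^ 2 + l 1 ^ 2 + l 2 ^ 2 := by
    rw [hQ2, Matrix.trace_mul_cycle, hU', Matrix.one_mul, Matrix.trace_diagonal,
      Fin.sum_univ_three]
  have hone : (1 : Matrix (Fin 3) (Fin 3) ℝ) = U * Matrix.diagonal (fun _ => (1:ℝ)) * Uᵀ := by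
    rw [Matrix.diagonal_one, Matrix.mul_one, hU]
  have e1 : ∀ (M : Matrix (Fin 3) (Fin 3) ℝ) (r : ℝ), r • (U * M * Uᵀ) = U * (r • M) * Uᵀ := by
    intro M r
    rw [mul_smul_comm, smul_mul_assoc]
  have hcomb : ∀ (c d : ℝ),
      Q ^ 4 - c • Q ^ 2 + d • (1 : Matrix (Fin 3) (Fin 3) ℝ)
        = U * Matrix.diagonal (fun i => l i ^ 4 - c * l i ^ 2 + d) * Uᵀ := by
    intro c d
    rw [hQ4, hQ2, hone, e1, e1, ← Matrix.sub_mul, ← Matrix.mul_sub, ← Matrix.add_mul,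
      ← Matrix.mul_add]
    congr 2
    ext i j
    by_cases h : i = j <;> simp [Matrix.diagonal_apply, h]
  have cancel : ∀ M : Matrix (Fin 3) (Fin 3) ℝ, U * M * Uᵀ = 0 → M = 0 := by
    intro M h
    have hM : M = Uᵀ * (U * M * Uᵀ) * U := by
      rw [show Uᵀ * (U * M * Uᵀ) * U = (Uᵀ * U) * M * (Uᵀ * U) by
        simp only [Matrix.mul_assoc], hU', Matrix.one_mul, Matrix.mul_one]
    rw [hM, h, Matrix.mul_zero, Matrix.zero_mul]
  have diag_zero : ∀ g : Fin 3 → ℝ, Matrix.diagonal g = 0 ↔ ∀ i, g i = 0 := by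
    intro g
    constructor
    · intro h i
      have := congrFun (congrFun h i) i
      simpa [Matrix.diagonal_apply] using this
    · intro h
      have hg : g = 0 := funext h
      rw [hg]
      exact Matrix.diagonal_zero
  rw [hcomb, htr]
  constructor
  · intro h
    have hall := (eig_iff (l 0) (l 1) (l 2) hsum).mp h
    have : (fun i => l i ^ 4 - 5 / 6 * (l 0 ^ 2 + l 1 ^ 2 + l 2 ^ 2) * l i ^ 2
        + 1 / 9 * (l 0 ^ 2 + l 1 ^ 2 + l 2 ^ 2) ^ 2) = 0 := by
      funext i
      fin_cases i
      · simpa using hall (l 0) (by simp)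
      · simpa using hall (l 1) (by simp)
      · simpa using hall (l 2) (by simp)
    rw [this, show Matrix.diagonal (0 : Fin 3 → ℝ) = 0 from Matrix.diagonal_zero,
      Matrix.mul_zero, Matrix.zero_mul]
  · intro h
    have hd := cancel _ h
    have hall := (diag_zero _).mp hd
    refine (eig_iff (l 0) (l 1) (l 2) hsum).mpr ?_
    intro x hx
    simp only [Set.mem_insert_iff, Set.mem_singleton_iff] at hx
    rcases hx with rfl | rfl | rfl
    · simpa using hall 0
    · simpa using hall 1
    · simpa using hall 2
end

section
/- With the surface-conforming decomposition Q = q̂ + β(n⊗n − (1/2)P) as above, Tr(Q³) = −(3/2)·β·(Tr(q̂²) − (1/2)β²). -/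
open Matrix

lemma traceq3 (q : Matrix (Fin 3) (Fin 3) ℝ) (htr : q.trace = 0) :
    (q * q * q).trace = 3 * q.det := by
  have h : q 2 2 = -(q 0 0 + q 1 1) := by
    have := htr
    simp [Matrix.trace, Fin.sum_univ_three, Matrix.diag] at this
    linarith
  simp [Matrix.trace, Matrix.diag, Matrix.mul_apply, Fin.sum_univ_three,
    Matrix.det_fin_three, h]
  ring

theorem stmt11 (n : Fin 3 → ℝ) (hn : n ⬝ᵥ n = 1)
    (q : Matrix (Fin 3) (Fin 3) ℝ) (hq : qᵀ = q) (hqn : q.mulVec n = 0)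
    (htr : q.trace = 0) (β : ℝ) :
    ((q + β • (vecMulVec n n
        - (1 / 2 : ℝ) • ((1 : Matrix (Fin 3) (Fin 3) ℝ) - vecMulVec n n))) ^ 3).trace
      = -(3 / 2) * β * ((q ^ 2).trace - (1 / 2) * β ^ 2) := by
  set N : Matrix (Fin 3) (Fin 3) ℝ := vecMulVec n n with hN
  have hnq : n ᵥ* q = 0 := by
    rw [← hq, Matrix.vecMul_transpose, hqn]
  have hqN : q * N = 0 := by
    ext i j
    have h1 := congrFun hqn i
    simp [Matrix.mulVec, dotProduct, Fin.sum_univ_three] at h1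
    simp [hN, Matrix.mul_apply, vecMulVec_apply, Fin.sum_univ_three]
    linear_combination n j * h1
  have hNq : N * q = 0 := by
    ext i j
    have h1 := congrFun hnq j
    simp [Matrix.vecMul, dotProduct, Fin.sum_univ_three] at h1
    simp [hN, Matrix.mul_apply, vecMulVec_apply, Fin.sum_univ_three]
    linear_combination n i * h1
  have hNN : N * N = N := by
    ext i j
    have h1 := hn
    simp [dotProduct, Fin.sum_univ_three] at h1
    simp [hN, Matrix.mul_apply, vecMulVec_apply, Fin.sum_univ_three]
    linear_combination (n i * n j) * h1
  have htrN : N.trace = 1 := by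
    have h1 := hn
    simp [dotProduct, Fin.sum_univ_three] at h1
    simp [hN, Matrix.trace, Matrix.diag, vecMulVec_apply, Fin.sum_univ_three]
    linarith
  have hdet : q.det = 0 := by
    by_contra hd
    have hu : IsUnit q.det := isUnit_iff_ne_zero.mpr hd
    have h1 : q⁻¹ * q = 1 := Matrix.nonsing_inv_mul q hu
    have h2 : n = 0 := by
      have : n = q⁻¹ *ᵥ (q *ᵥ n) := by
        rw [Matrix.mulVec_mulVec, h1, Matrix.one_mulVec]
      rw [hqn] at this
      simpa using this
    rw [h2] at hn
    simp at hn
  have htr3 : (q * (q * q)).trace = 0 := by rw [← mul_assoc, traceq3 q htr, hdet]; ring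
  have hQ : q + β • (N - (1 / 2 : ℝ) • ((1 : Matrix (Fin 3) (Fin 3) ℝ) - N))
      = q + (3 * β / 2) • N + (-(β / 2)) • 1 := by
    ext i j
    simp [Matrix.sub_apply, Matrix.add_apply, Matrix.smul_apply]
    ring
  rw [hQ, pow_succ, pow_succ, pow_one]
  simp only [mul_assoc, Matrix.add_mul, Matrix.mul_add, Matrix.smul_mul, Matrix.mul_smul,
    hqN, hNq, hNN, Matrix.mul_zero, smul_zero, add_zero, zero_add, Matrix.mul_one, Matrix.one_mul,
    smul_smul]
  simp only [Matrix.trace_add, Matrix.trace_smul, htr, htrN, Matrix.trace_one, htr3,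
    Matrix.trace_zero, Fintype.card_fin, smul_eq_mul, pow_two]
  ring
end

section
/- With the surface-conforming decomposition Q = q̂ + β(n⊗n − (1/2)P), one has Tr(Q⁴) = (1/2)·((Tr q̂²)² + 3β²·Tr(q̂²) + (9/4)β⁴). -/
open Matrix

/-- Cayley–Hamilton style formula for the adjugate of a 3×3 real matrix. -/
lemma adj3 (A : Matrix (Fin 3) (Fin 3) ℝ) :
    adjugate A = A * A - A.trace • A
      + (((A.trace) ^ 2 - (A * A).trace) / 2) • (1 : Matrix (Fin 3) (Fin 3) ℝ) := by
  ext i j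
  fin_cases i <;> fin_cases j <;>
    simp [adjugate_fin_three, mul_apply, trace_fin_three, Fin.sum_univ_three,
      Matrix.one_apply] <;> ring

theorem stmt12 (n : Fin 3 → ℝ) (hn : n ⬝ᵥ n = 1)
    (q : Matrix (Fin 3) (Fin 3) ℝ) (hq : qᵀ = q) (hqn : q.mulVec n = 0)
    (htr : q.trace = 0) (β : ℝ) :
    ((q + β • (vecMulVec n n
        - (1 / 2 : ℝ) • ((1 : Matrix (Fin 3) (Fin 3) ℝ) - vecMulVec n n))) ^ 4).trace
      = (1 / 2) * (((q ^ 2).trace) ^ 2 + 3 * β ^ 2 * (q ^ 2).trace + (9 / 4) * β ^ 4) := by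
  have hn' : n ⬝ᵥ n = 1 := hn
  simp only [dotProduct, Fin.sum_univ_three] at hn'
  set N : Matrix (Fin 3) (Fin 3) ℝ := vecMulVec n n with hNdef
  -- basic multiplicative facts
  have hqn' : ∀ i, q i 0 * n 0 + q i 1 * n 1 + q i 2 * n 2 = 0 := by
    intro i
    have := congrFun hqn i
    simpa [mulVec, dotProduct, Fin.sum_univ_three] using this
  have hN : N * N = N := by
    ext i j
    simp only [hNdef, mul_apply, vecMulVec_apply, Fin.sum_univ_three]
    linear_combination (n i * n j) * hn'
  have hqN : q * N = 0 := by
    ext i j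
    simp only [hNdef, mul_apply, vecMulVec_apply, Fin.sum_univ_three, Matrix.zero_apply]
    have h := hqn' i
    linear_combination n j * h
  have hNq : N * q = 0 := by
    have h1 : (q * N)ᵀ = 0 := by rw [hqN]; simp
    have h2 : Nᵀ = N := by
      ext i j; simp [hNdef, vecMulVec_apply, mul_comm]
    calc N * q = Nᵀ * qᵀᵀ := by rw [h2, transpose_transpose]
    _ = (qᵀ * N)ᵀ := by rw [transpose_mul, transpose_transpose]
    _ = 0 := by rw [hq, h1]
  have htN : N.trace = 1 := by
    simp only [hNdef, trace_fin_three, vecMulVec_apply]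
    linarith [hn']
  -- q³ = (Tr q² / 2) q  via adjugate
  have hdet : q.det = 0 := by
    rw [← Matrix.exists_mulVec_eq_zero_iff]
    refine ⟨n, ?_, hqn⟩
    intro h
    rw [h] at hn
    simp at hn
  have hadj := mul_adjugate q
  rw [adj3, htr, hdet] at hadj
  have hq3 : q * (q * q) = ((q * q).trace / 2) • q := by
    have h := hadj
    simp only [zero_smul, sub_zero, zero_pow, zero_sub, mul_add, mul_sub, mul_smul_comm,
      mul_one] at h
    linear_combination (norm := module) h
  have hq3' : (q * q) * q = ((q * q).trace / 2) • q := by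
    rw [mul_assoc, hq3]
  have hq4 : (q * q) * (q * q) = ((q * q).trace / 2) • (q * q) := by
    rw [mul_assoc, hq3, mul_smul_comm]
  have hqqN : (q * q) * N = 0 := by rw [mul_assoc, hqN, mul_zero]
  have hNqq : N * (q * q) = 0 := by rw [← mul_assoc, hNq, zero_mul]
  set Q : Matrix (Fin 3) (Fin 3) ℝ :=
    q + β • (N - (1 / 2 : ℝ) • ((1 : Matrix (Fin 3) (Fin 3) ℝ) - N)) with hQdef
  have hQ : Q = q + (3 * β / 2) • N + (-(β / 2)) • (1 : Matrix (Fin 3) (Fin 3) ℝ) := by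
    rw [hQdef]; module
  have h2 : Q * Q = q * q + (-β) • q + (3 / 4 * β ^ 2) • N
      + (β ^ 2 / 4) • (1 : Matrix (Fin 3) (Fin 3) ℝ) := by
    rw [hQ]
    simp only [add_mul, mul_add, smul_mul_assoc, mul_smul_comm, smul_smul, mul_one, one_mul,
      hN, hqN, hNq, smul_zero, add_zero, zero_add]
    module
  have h4 : Q ^ 4 = ((q * q).trace / 2 + 3 / 2 * β ^ 2) • (q * q)
      + (-β * (q * q).trace - β ^ 3 / 2) • q
      + (15 / 16 * β ^ 4) • N + (β ^ 4 / 16) • (1 : Matrix (Fin 3) (Fin 3) ℝ) := by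
    have e1 : Q ^ 4 = (Q * Q) * (Q * Q) := by
      rw [show (4:ℕ) = 2 * 2 from rfl, pow_mul, sq, sq]
    rw [e1, h2]
    simp only [add_mul, mul_add, smul_mul_assoc, mul_smul_comm, smul_smul, mul_one, one_mul,
      hN, hqN, hNq, hqqN, hNqq, hq4, hq3, hq3', smul_zero, add_zero, zero_add]
    module
  have hgoal : (Q ^ 4).trace
      = (1 / 2) * (((q ^ 2).trace) ^ 2 + 3 * β ^ 2 * (q ^ 2).trace + (9 / 4) * β ^ 4) := by
    rw [h4]
    simp only [trace_add, trace_smul, htN, htr, Matrix.trace_one, smul_eq_mul, sq]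
    ring_nf
    rw [show Fintype.card (Fin 3) = 3 from rfl]  -- if needed
    ring
  exact hgoal
end

section
/- For Q = q̂ + β(n⊗n − (1/2)P) surface conforming as above, the biaxiality matrix satisfies B(Q) = (1/36)·(2·Tr(q̂²) − 9β²)·(−3β·q̂ + 2·Tr(q̂²)·(n⊗n − (1/2)P)). -/
open Matrix

private lemma ch3' (A : Matrix (Fin 3) (Fin 3) ℝ) :
    A*A*A = A.trace • (A*A) + (((A*A).trace - A.trace^2)/2) • A
      + A.det • (1 : Matrix (Fin 3) (Fin 3) ℝ) := by
  ext i j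
  fin_cases i <;> fin_cases j <;>
    simp [Matrix.mul_apply, Matrix.trace, Matrix.det_fin_three, Fin.sum_univ_three,
      Matrix.one_apply, Matrix.diag] <;> ring

theorem stmt13 (n : Fin 3 → ℝ) (hn : n ⬝ᵥ n = 1)
    (q : Matrix (Fin 3) (Fin 3) ℝ) (hq : qᵀ = q) (hqn : q.mulVec n = 0)
    (htr : q.trace = 0) (β : ℝ)
    (M : Matrix (Fin 3) (Fin 3) ℝ)
    (hM : M = vecMulVec n n - (1 / 2 : ℝ) • ((1 : Matrix (Fin 3) (Fin 3) ℝ) - vecMulVec n n))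
    (Q : Matrix (Fin 3) (Fin 3) ℝ) (hQ : Q = q + β • M) :
    Q ^ 4 - ((5 / 6) * (Q ^ 2).trace) • Q ^ 2
        + ((1 / 9) * ((Q ^ 2).trace) ^ 2) • (1 : Matrix (Fin 3) (Fin 3) ℝ)
      = ((1 / 36) * (2 * (q ^ 2).trace - 9 * β ^ 2))
          • ((-(3 * β)) • q + (2 * (q ^ 2).trace) • M) := by
  set N := vecMulVec n n with hNdef
  have hNN : N * N = N := by
    ext i j
    simp only [hNdef, Matrix.mul_apply, vecMulVec_apply]
    have : ∑ k, n i * n k * (n k * n j) = (n i * n j) * ∑ k, n k * n k := by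
      rw [Finset.mul_sum]; apply Finset.sum_congr rfl; intros; ring
    rw [this]
    simp [dotProduct] at hn
    rw [hn]; ring
  have hNT : Nᵀ = N := by
    ext i j; simp [hNdef, vecMulVec_apply, mul_comm]
  have hqN : q * N = 0 := by
    ext i j
    have h := congrFun hqn i
    simp only [Matrix.mulVec, dotProduct, Pi.zero_apply] at h
    simp only [hNdef, Matrix.mul_apply, vecMulVec_apply, Matrix.zero_apply]
    have : ∑ k, q i k * (n k * n j) = (∑ k, q i k * n k) * n j := by
      rw [Finset.sum_mul]; apply Finset.sum_congr rfl; intros; ring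
    rw [this, h, zero_mul]
  have hNq : N * q = 0 := by
    have := congrArg Matrix.transpose hqN
    rw [Matrix.transpose_mul, hq, hNT, Matrix.transpose_zero] at this
    exact this
  have htrN : N.trace = 1 := by
    simp only [hNdef, Matrix.trace, Matrix.diag, vecMulVec_apply]
    simpa [dotProduct] using hn
  have hdet : q.det = 0 := by
    rw [← Matrix.exists_mulVec_eq_zero_iff]
    refine ⟨n, ?_, hqn⟩
    intro h; rw [h] at hn; simp [dotProduct] at hn
  set s := (q ^ 2).trace with hs
  have hsqq : (q * q).trace = s := by rw [hs, pow_two]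
  -- Cayley-Hamilton specialized
  have hq3 : q * q * q = (s/2) • q := by
    have := ch3' q
    rw [htr, hdet, hsqq] at this
    simpa using this
  have hq4 : (q * q) * (q * q) = (s/2) • (q * q) := by
    rw [← mul_assoc, hq3, smul_mul_assoc]
  have hqqN : (q * q) * N = 0 := by rw [mul_assoc, hqN, mul_zero]
  have hNqq : N * (q * q) = 0 := by rw [← mul_assoc, hNq, zero_mul]
  -- key: q² = (s/2)(1 - N)
  set r : Matrix (Fin 3) (Fin 3) ℝ :=
    q * q - (s/2) • ((1 : Matrix (Fin 3) (Fin 3) ℝ) - N) with hrdef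
  have hrT : rᵀ = r := by
    rw [hrdef]
    rw [Matrix.transpose_sub, Matrix.transpose_smul, Matrix.transpose_sub,
      Matrix.transpose_one, hNT, Matrix.transpose_mul, hq]
  have hrr : r * r = (-(s/2)) • (q*q) + (s^2/4) • (1 : Matrix (Fin 3) (Fin 3) ℝ)
      - (s^2/4) • N := by
    rw [hrdef]
    simp only [sub_mul, mul_sub, smul_mul_assoc, mul_smul_comm, smul_sub, smul_smul,
      mul_one, one_mul, hNN, hq4, hqqN, hNqq, smul_zero, sub_zero]
    module
  have htrr : (r * r).trace = 0 := by
    rw [hrr]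
    simp only [Matrix.trace_sub, Matrix.trace_add, Matrix.trace_smul, Matrix.trace_one,
      hsqq, htrN, smul_eq_mul]
    simp
    ring
  have hr0 : r = 0 := by
    have hsum : ∑ i, ∑ j, r i j * r i j = 0 := by
      rw [← htrr]
      simp only [Matrix.trace, Matrix.diag, Matrix.mul_apply]
      apply Finset.sum_congr rfl; intro i _
      apply Finset.sum_congr rfl; intro j _
      have h := congrFun (congrFun hrT i) j
      rw [Matrix.transpose_apply] at h
      rw [h]
    ext i j
    have h1 : ∀ i ∈ (Finset.univ : Finset (Fin 3)), (∑ j, r i j * r i j) = 0 :=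
      (Finset.sum_eq_zero_iff_of_nonneg (fun i _ =>
        Finset.sum_nonneg fun j _ => mul_self_nonneg _)).mp hsum
    have h2 := (Finset.sum_eq_zero_iff_of_nonneg (fun j _ => mul_self_nonneg (r i j))).mp
      (h1 i (Finset.mem_univ i)) j (Finset.mem_univ j)
    simpa using mul_self_eq_zero.mp h2
  have hq2 : q * q = (s/2) • (1 : Matrix (Fin 3) (Fin 3) ℝ) - (s/2) • N := by
    have := sub_eq_zero.mp hr0
    rw [this, smul_sub]
  -- assemble
  have hM' : M = (3/2 : ℝ) • N - (1/2 : ℝ) • (1 : Matrix (Fin 3) (Fin 3) ℝ) := by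
    rw [hM]; module
  have hQ2 : Q * Q = (s/2 + β^2/4) • (1 : Matrix (Fin 3) (Fin 3) ℝ)
      + (3*β^2/4 - s/2) • N + (-β) • q := by
    rw [hQ, hM']
    simp only [add_mul, mul_add, sub_mul, mul_sub, smul_mul_assoc, mul_smul_comm,
      smul_smul, smul_sub, smul_add, mul_one, one_mul, hNN, hqN, hNq, hq2,
      smul_zero, add_zero, zero_add]
    module
  have hTr : (Q ^ 2).trace = s + 3*β^2/2 := by
    rw [pow_two, hQ2]
    simp only [Matrix.trace_add, Matrix.trace_smul, Matrix.trace_one, htrN, htr,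
      smul_eq_mul]
    simp
    ring
  have hQ4 : Q ^ 4 = (Q * Q) * (Q * Q) := by
    rw [show (4:ℕ) = 2+2 by norm_num, pow_add, pow_two]
  rw [hQ4, show Q ^ 2 = Q * Q from sq Q] at *
  rw [hTr, hQ2, hM']
  simp only [add_mul, mul_add, sub_mul, mul_sub, smul_mul_assoc, mul_smul_comm,
    smul_smul, smul_sub, smul_add, mul_one, one_mul, hNN, hqN, hNq, hq2,
    smul_zero, add_zero, zero_add]
  module
end

section
/- A surface-conforming Q-tensor Q = q̂ + β(n⊗n − (1/2)P) (as above) is uniaxial if and only if (2·Tr(q̂²) = 9β²) or q̂ = 0. -/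
/-!
Write `Q = (q̂ + (3β/2) n⊗n) - (β/2) Id`. Since `n⊗n` is an idempotent that `q̂` annihilates on
both sides, `(q̂ + c n⊗n)^k = q̂^k + c^k n⊗n`, so with `a = Tr q̂²` and `Tr q̂³ = 3 det q̂ = 0`
(`q̂` is traceless and kills `n`) one gets `Tr Q² = a + 3β²/2` and `Tr Q³ = 3β³/4 - 3βa/2`.
Then `(Tr Q²)³ - 6 (Tr Q³)² = a (2a - 9β²)² / 4`, and `a = 0` iff `q̂ = 0` because `q̂` is
real symmetric.
-/

open Matrix

theorem pow_add_smul_of_orthogonal {R A : Type*} [CommRing R] [Ring A] [Algebra R A] {a e : A}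
    (he : IsIdempotentElem e) (hae : a * e = 0) (hea : e * a = 0) (c : R) {k : ℕ}
    (hk : k ≠ 0) :
    (a + c • e) ^ k = a ^ k + c ^ k • e := by
  induction k with
  | zero => exact absurd rfl hk
  | succ k ih =>
    rcases eq_or_ne k 0 with rfl | hk
    · simp
    rw [pow_succ, ih hk, pow_succ, pow_succ']
    have hake : a ^ k * e = 0 := by
      obtain ⟨j, rfl⟩ := Nat.exists_eq_succ_of_ne_zero hk
      rw [pow_succ, mul_assoc, hae, mul_zero]
    simp only [add_mul, mul_add, mul_smul_comm, smul_mul_assoc, hake, hea, he.eq, smul_zero,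
      smul_smul, add_zero, zero_add]

namespace Matrix

variable {ι R : Type*} [Fintype ι] [CommRing R]

section

variable {n : ι → R} {q : Matrix ι ι R}

theorem isIdempotentElem_vecMulVec_self (hn : n ⬝ᵥ n = 1) :
    IsIdempotentElem (vecMulVec n n) := by
  rw [IsIdempotentElem, vecMulVec_mul_vecMulVec, hn, one_smul]

theorem mul_vecMulVec_eq_zero (hqn : q *ᵥ n = 0) : q * vecMulVec n n = 0 := by
  rw [mul_vecMulVec, hqn, zero_vecMulVec]

theorem vecMulVec_mul_eq_zero (hq : qᵀ = q) (hqn : q *ᵥ n = 0) :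
    vecMulVec n n * q = 0 := by
  rw [vecMulVec_mul, ← hq, vecMul_transpose, hqn, vecMulVec_zero]

end

variable [DecidableEq ι]

theorem trace_sq_add_smul_one (A : Matrix ι ι R) (d : R) :
    trace ((A + d • 1) ^ 2) = trace (A ^ 2) + 2 * d * trace A + d ^ 2 * Fintype.card ι := by
  have : (A + d • 1) ^ 2 = A ^ 2 + (2 * d) • A + d ^ 2 • 1 := by
    simp only [sq, add_mul, mul_add, Matrix.mul_one, Matrix.one_mul,
      mul_smul_comm, smul_mul_assoc]
    module
  simp [this, trace_add, trace_smul, mul_assoc]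

theorem trace_pow_three_add_smul_one (A : Matrix ι ι R) (d : R) :
    trace ((A + d • 1) ^ 3) =
      trace (A ^ 3) + 3 * d * trace (A ^ 2) + 3 * d ^ 2 * trace A + d ^ 3 * Fintype.card ι := by
  have : (A + d • 1) ^ 3 = A ^ 3 + (3 * d) • A ^ 2 + (3 * d ^ 2) • A + d ^ 3 • 1 := by
    simp only [pow_succ, pow_zero, Matrix.one_mul, add_mul, mul_add, Matrix.mul_one,
      mul_smul_comm, smul_mul_assoc]
    module
  simp [this, trace_add, trace_smul, mul_assoc]

theorem trace_pow_three_eq_three_mul_det (A : Matrix (Fin 3) (Fin 3) R) (hA : trace A = 0) :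
    trace (A ^ 3) = 3 * det A := by
  have h : A 0 0 + A 1 1 + A 2 2 = 0 := by simpa [trace, Fin.sum_univ_three] using hA
  simp only [pow_succ, pow_zero, Matrix.one_mul, trace, diag, mul_apply, Fin.sum_univ_three,
    det_fin_three]
  -- Newton's identity `p₃ = e₁³ - 3 e₁ e₂ + 3 e₃` with `e₁ = 0`
  linear_combination ((A 0 0 + A 1 1 + A 2 2) ^ 2 - 3 * (A 0 0 * A 1 1 - A 0 1 * A 1 0
    + A 0 0 * A 2 2 - A 0 2 * A 2 0 + A 1 1 * A 2 2 - A 1 2 * A 2 1)) * h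

theorem trace_sq_eq_zero_iff_of_transpose_eq {q : Matrix ι ι ℝ} (hq : qᵀ = q) :
    trace (q ^ 2) = 0 ↔ q = 0 := by
  rw [sq, ← trace_conjTranspose_mul_self_eq_zero_iff, conjTranspose_eq_transpose_of_trivial, hq]

end Matrix

theorem uniaxial_trace_identity_iff (a β : ℝ) :
    (a + 3 / 2 * β ^ 2) ^ 3 = 6 * (3 / 4 * β ^ 3 - 3 / 2 * β * a) ^ 2 ↔
      2 * a = 9 * β ^ 2 ∨ a = 0 := by
  have key : (a + 3 / 2 * β ^ 2) ^ 3 - 6 * (3 / 4 * β ^ 3 - 3 / 2 * β * a) ^ 2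
      = a * (2 * a - 9 * β ^ 2) ^ 2 / 4 := by ring
  rw [← sub_eq_zero, key]
  simp [sub_eq_zero, or_comm]

theorem stmt14 (n : Fin 3 → ℝ) (hn : n ⬝ᵥ n = 1)
    (q : Matrix (Fin 3) (Fin 3) ℝ) (hq : qᵀ = q) (hqn : q.mulVec n = 0)
    (htr : q.trace = 0) (β : ℝ)
    (Q : Matrix (Fin 3) (Fin 3) ℝ)
    (hQ : Q = q + β • (vecMulVec n n
        - (1 / 2 : ℝ) • ((1 : Matrix (Fin 3) (Fin 3) ℝ) - vecMulVec n n))) :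
    ((Q ^ 2).trace) ^ 3 = 6 * ((Q ^ 3).trace) ^ 2 ↔
      (2 * (q ^ 2).trace = 9 * β ^ 2 ∨ q = 0) := by
  have hQ' : Q = (q + (3 * β / 2) • vecMulVec n n) + (-(β / 2)) • 1 := by rw [hQ]; module
  have hpow {k : ℕ} (hk : k ≠ 0) :
      (q + (3 * β / 2) • vecMulVec n n) ^ k = q ^ k + (3 * β / 2) ^ k • vecMulVec n n :=
    pow_add_smul_of_orthogonal (isIdempotentElem_vecMulVec_self hn) (mul_vecMulVec_eq_zero hqn)
      (vecMulVec_mul_eq_zero hq hqn) _ hk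
  have hdet : q.det = 0 :=
    exists_mulVec_eq_zero_iff.mp ⟨n, fun h => by simp [h] at hn, hqn⟩
  have htr3 : (q ^ 3).trace = 0 := by rw [trace_pow_three_eq_three_mul_det q htr, hdet, mul_zero]
  have ht2 : (Q ^ 2).trace = (q ^ 2).trace + 3 / 2 * β ^ 2 := by
    rw [hQ', trace_sq_add_smul_one, hpow two_ne_zero]
    simp only [trace_add, trace_smul, trace_vecMulVec, hn, htr, smul_eq_mul, Fintype.card_fin]
    ring
  have ht3 : (Q ^ 3).trace = 3 / 4 * β ^ 3 - 3 / 2 * β * (q ^ 2).trace := by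
    rw [hQ', trace_pow_three_add_smul_one, hpow three_ne_zero, hpow two_ne_zero]
    simp only [trace_add, trace_smul, trace_vecMulVec, hn, htr, htr3, smul_eq_mul,
      Fintype.card_fin]
    ring
  rw [ht2, ht3, ← trace_sq_eq_zero_iff_of_transpose_eq hq]
  exact uniaxial_trace_identity_iff _ _
end
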